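/- arXiv:2401.16491 — 2 statements merged into one kernel-verified Lean document; each statement's English description precedes it below -/
import Mathlib

section
/- Let 0 < ξ = γ+1 < ω₁ be a successor ordinal and let A ∈ MAX(S_ξ). Then there exist unique sets A_1, …, A_{min A} ∈ MAX(S_γ) such that A_1 < A_2 < ⋯ < A_{min A} and A = A_1 ∪ A_2 ∪ ⋯ ∪ A_{min A}. -/
noncomputable section

open scoped Classical

/-- The first uncountable ordinal. -/
def omegaOne : Ordinal := (Cardinal.aleph 1).ord

/-- `A < B` for finite sets of naturals: every element of `A` is smaller than every
element of `B` (i.e. `max A < min B`, with the conventions `∅ < B` and `A < ∅`). -/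
def finLT (A B : Finset ℕ) : Prop := ∀ a ∈ A, ∀ b ∈ B, a < b

/-- `n ≤ A`, i.e. `n ≤ min A` (with `min ∅ = ∞`). -/
def finLE (n : ℕ) (A : Finset ℕ) : Prop := ∀ a ∈ A, n ≤ a

/-- The successor step in the definition of the Schreier families:
unions `E_1 ∪ ⋯ ∪ E_n` with `n ≤ E_1 < E_2 < ⋯ < E_n` and each `E_i` a nonempty member
of `F` (the empty set arises from `n = 0`). -/
def succStep (F : Set (Finset ℕ)) : Set (Finset ℕ) :=
  {A | ∃ (n : ℕ) (E : Fin n → Finset ℕ),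
        (∀ i, E i ∈ F) ∧ (∀ i, (E i).Nonempty) ∧
        (∀ i j : Fin n, i < j → finLT (E i) (E j)) ∧
        (∀ i, finLE n (E i)) ∧ A = Finset.univ.biUnion E}

/-- A system of Schreier families `S ξ` for `ξ < ω₁`, together with the chosen
`ξ`-approximating sequences `α ξ ·` (indexed by `n ≥ 1`) for limit ordinals `ξ < ω₁`,
satisfying the standing assumptions:  each `α ξ n` is a successor ordinal in `[1, ξ)`,
the sequence strictly increases to `ξ`, `α ξ 1 = 1`, and whenever
`A, B ∈ S (α ξ n)` with `1 < A < B` then `A ∪ B ∈ S (α ξ (n+1))`. -/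
structure SchreierSystem where
  α : Ordinal → ℕ → Ordinal
  S : Ordinal → Set (Finset ℕ)
  S_zero : S 0 = {A : Finset ℕ | A = ∅ ∨ ∃ n : ℕ, A = {n}}
  S_succ : ∀ γ : Ordinal, S (γ + 1) = succStep (S γ)
  S_limit : ∀ ξ : Ordinal, Order.IsSuccLimit ξ → ξ < omegaOne →
    S ξ = {E : Finset ℕ | ∃ n : ℕ, 1 ≤ n ∧ finLE n E ∧ E ∈ S (α ξ n)}
  α_pos : ∀ ξ : Ordinal, Order.IsSuccLimit ξ → ξ < omegaOne → ∀ n : ℕ, 1 ≤ n → 1 ≤ α ξ n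
  α_lt : ∀ ξ : Ordinal, Order.IsSuccLimit ξ → ξ < omegaOne → ∀ n : ℕ, 1 ≤ n → α ξ n < ξ
  α_succOrd : ∀ ξ : Ordinal, Order.IsSuccLimit ξ → ξ < omegaOne → ∀ n : ℕ, 1 ≤ n →
    ∃ β : Ordinal, α ξ n = β + 1
  α_mono : ∀ ξ : Ordinal, Order.IsSuccLimit ξ → ξ < omegaOne → ∀ n : ℕ, 1 ≤ n → α ξ n < α ξ (n + 1)
  α_tendsto : ∀ ξ : Ordinal, Order.IsSuccLimit ξ → ξ < omegaOne → ∀ β : Ordinal, β < ξ →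
    ∃ n : ℕ, 1 ≤ n ∧ β < α ξ n
  α_one : ∀ ξ : Ordinal, Order.IsSuccLimit ξ → ξ < omegaOne → α ξ 1 = 1
  α_union : ∀ ξ : Ordinal, Order.IsSuccLimit ξ → ξ < omegaOne → ∀ n : ℕ, 1 ≤ n →
    ∀ A B : Finset ℕ, A ∈ S (α ξ n) → B ∈ S (α ξ n) → finLE 2 A → finLT A B →
      A ∪ B ∈ S (α ξ (n + 1))

/-- `A` is a maximal element of the family `F` (with respect to inclusion). -/
def MaxIn (F : Set (Finset ℕ)) (A : Finset ℕ) : Prop :=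
  A ∈ F ∧ ∀ B ∈ F, A ⊆ B → B = A

/-!
Write `A = E₁ ∪ ⋯ ∪ Eᵣ` with `r ≤ E₁ < ⋯ < Eᵣ` and `Eᵢ ∈ S_γ`. Both `r = min A` and the
maximality of every block follow from maximality of `A`: otherwise `A ∪ {M}` lies in `S_{γ+1}`
for any `M > max A`. If `r < min A`, append the block `{M}`. If some `E_j ⊊ B ∈ S_γ`, then
`E_j ∪ {min E_{j+1}} ∈ S_γ`, and each later block drops its minimum and takes the minimum of the
next block, the last one taking `M`. This cascade needs the replacement property of Schreier
families (delete any element of a member and add a new maximum `≥ 1`), which is proved by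
transfinite induction with the same cascade in the successor step.

For uniqueness, the first blocks of two decompositions of `A` are both initial segments of `A`,
hence comparable, hence equal by maximality; then induct on the remaining blocks.
-/
open Finset

def Successive {r : ℕ} (P : Fin r → Finset ℕ) : Prop :=
  ∀ i j, i < j → finLT (P i) (P j)

structure IsDecomp (F : Set (Finset ℕ)) {r : ℕ} (P : Fin r → Finset ℕ) : Prop where
  mem : ∀ i, P i ∈ F
  nonempty : ∀ i, (P i).Nonempty
  successive : Successive P

section Decomp

variable {F : Set (Finset ℕ)} {r : ℕ}

lemma biUnion_cons (E : Finset ℕ) (P : Fin r → Finset ℕ) :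
    univ.biUnion (Fin.cons E P : Fin (r + 1) → Finset ℕ) = E ∪ univ.biUnion P := by
  ext x
  simp [Fin.exists_fin_succ]

lemma biUnion_snoc (P : Fin r → Finset ℕ) (E : Finset ℕ) :
    univ.biUnion (Fin.snoc P E : Fin (r + 1) → Finset ℕ) = univ.biUnion P ∪ E := by
  ext x
  simp [Fin.exists_fin_succ', or_comm]

lemma successive_cons {E : Finset ℕ} {P : Fin r → Finset ℕ} :
    Successive (Fin.cons E P : Fin (r + 1) → Finset ℕ) ↔
      finLT E (univ.biUnion P) ∧ Successive P := by
  refine ⟨fun h => ⟨fun a ha b hb => ?_, fun i j hij => ?_⟩, fun ⟨hE, hP⟩ i j hij => ?_⟩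
  · obtain ⟨i, -, hi⟩ := mem_biUnion.1 hb
    simpa using h 0 i.succ i.succ_pos a ha b hi
  · simpa using h i.succ j.succ (Fin.succ_lt_succ_iff.2 hij)
  · induction j using Fin.cases with
    | zero => exact absurd hij (Fin.not_lt_zero i)
    | succ j =>
      induction i using Fin.cases with
      | zero => exact fun a ha b hb => hE a ha b (mem_biUnion.2 ⟨j, mem_univ _, hb⟩)
      | succ i => simpa using hP i j (Fin.succ_lt_succ_iff.1 hij)

lemma successive_snoc {P : Fin r → Finset ℕ} {E : Finset ℕ} (hP : Successive P)
    (hE : finLT (univ.biUnion P) E) : Successive (Fin.snoc P E : Fin (r + 1) → Finset ℕ) := by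
  intro i j hij
  induction j using Fin.lastCases with
  | last =>
    induction i using Fin.lastCases with
    | last => exact absurd hij (lt_irrefl _)
    | cast i =>
      simp only [Fin.snoc_castSucc, Fin.snoc_last]
      exact fun a ha => hE a (mem_biUnion.2 ⟨i, mem_univ _, ha⟩)
  | cast j =>
    induction i using Fin.lastCases with
    | last => exact absurd hij (not_lt.2 (Fin.le_last _))
    | cast i => simpa using hP i j (Fin.castSucc_lt_castSucc_iff.1 hij)

lemma isDecomp_cons {E : Finset ℕ} {P : Fin r → Finset ℕ} :
    IsDecomp F (Fin.cons E P : Fin (r + 1) → Finset ℕ) ↔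
      E ∈ F ∧ E.Nonempty ∧ finLT E (univ.biUnion P) ∧ IsDecomp F P := by
  refine ⟨fun h => ?_, fun ⟨hEF, hE, hEP, hP⟩ => ?_⟩
  · obtain ⟨hEP, hP⟩ := successive_cons.1 h.successive
    exact ⟨by simpa using h.mem 0, by simpa using h.nonempty 0, hEP,
      ⟨fun i => by simpa using h.mem i.succ, fun i => by simpa using h.nonempty i.succ, hP⟩⟩
  · exact ⟨Fin.cases hEF hP.mem, Fin.cases hE hP.nonempty, successive_cons.2 ⟨hEP, hP.successive⟩⟩

lemma IsDecomp.snoc {P : Fin r → Finset ℕ} {E : Finset ℕ} (hP : IsDecomp F P) (hEF : E ∈ F)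
    (hE : E.Nonempty) (hPE : finLT (univ.biUnion P) E) :
    IsDecomp F (Fin.snoc P E : Fin (r + 1) → Finset ℕ) where
  mem := Fin.lastCases (by simpa using hEF) (by simpa using hP.mem)
  nonempty := Fin.lastCases (by simpa using hE) (by simpa using hP.nonempty)
  successive := successive_snoc hP.successive hPE

lemma isDecomp_zero (P : Fin 0 → Finset ℕ) : IsDecomp F P :=
  ⟨finZeroElim, finZeroElim, fun i => i.elim0⟩

lemma Successive.notMem_of_ne {P : Fin r → Finset ℕ} (hP : Successive P) {i j : Fin r}
    (hij : i ≠ j) {x : ℕ} (hx : x ∈ P i) : x ∉ P j := fun hxj =>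
  hij.lt_or_gt.elim (fun h => (hP i j h x hx x hxj).false) (fun h => (hP j i h x hxj x hx).false)

lemma mem_succStep_iff {A : Finset ℕ} :
    A ∈ succStep F ↔ ∃ (r : ℕ) (P : Fin r → Finset ℕ),
      IsDecomp F P ∧ finLE r A ∧ A = univ.biUnion P := by
  refine ⟨fun ⟨r, P, hF, hne, hlt, hle, hA⟩ => ⟨r, P, ⟨hF, hne, hlt⟩, ?_, hA⟩,
    fun ⟨r, P, hP, hle, hA⟩ => ⟨r, P, hP.mem, hP.nonempty, hP.successive, ?_, hA⟩⟩
  · subst hA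
    intro a ha
    obtain ⟨i, -, hi⟩ := mem_biUnion.1 ha
    exact hle i a hi
  · exact fun i a ha => hle a (hA ▸ mem_biUnion.2 ⟨i, mem_univ _, ha⟩)

lemma IsDecomp.exists_of_subset (hF : IsLowerSet F) {P : Fin r → Finset ℕ} (hP : IsDecomp F P)
    {B : Finset ℕ} (hB : B ⊆ univ.biUnion P) :
    ∃ s ≤ r, ∃ Q : Fin s → Finset ℕ, IsDecomp F Q ∧ B = univ.biUnion Q := by
  induction r generalizing B with
  | zero => exact ⟨0, le_rfl, P, hP, by simpa using hB⟩
  | succ r ih =>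
    obtain ⟨E, T, rfl⟩ : ∃ E T, P = Fin.cons E T := ⟨_, _, (Fin.cons_self_tail P).symm⟩
    obtain ⟨hEF, -, hET, hT⟩ := isDecomp_cons.1 hP
    rw [biUnion_cons] at hB
    have hBT : B \ E ⊆ univ.biUnion T := fun x hx =>
      (mem_union.1 (hB (mem_sdiff.1 hx).1)).resolve_left (mem_sdiff.1 hx).2
    obtain ⟨s, hs, Q, hQ, hBQ⟩ := ih hT hBT
    by_cases hBE : (B ∩ E).Nonempty
    · refine ⟨s + 1, by omega, Fin.cons (B ∩ E) Q, isDecomp_cons.2 ⟨hF inter_subset_right hEF,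
        hBE, fun a ha b hb => ?_, hQ⟩, ?_⟩
      · rw [← hBQ] at hb
        exact hET a (mem_inter.1 ha).2 b (hBT hb)
      · rw [biUnion_cons, ← hBQ, union_comm, sdiff_union_inter]
    · refine ⟨s, by omega, Q, hQ, ?_⟩
      rw [← hBQ, not_nonempty_iff_eq_empty, ← disjoint_iff_inter_eq_empty] at *
      exact (sdiff_eq_self_of_disjoint hBE).symm

lemma isLowerSet_succStep (hF : IsLowerSet F) : IsLowerSet (succStep F) := by
  intro A B hBA hA
  obtain ⟨r, P, hP, hle, rfl⟩ := mem_succStep_iff.1 hA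
  obtain ⟨s, hs, Q, hQ, rfl⟩ := hP.exists_of_subset hF hBA
  exact mem_succStep_iff.2 ⟨s, Q, hQ, fun b hb => hs.trans (hle b (hBA hb)), rfl⟩

-- `1 ≤ c` because `{0} ∉ S_γ` once `γ ≥ 1`.
def IsTopExtendable (F : Set (Finset ℕ)) (W : Finset ℕ) : Prop :=
  ∀ c, 1 ≤ c → (∀ w ∈ W, w < c) → insert c W ∈ F

def HasTopReplacement (F : Set (Finset ℕ)) : Prop :=
  ∀ X ∈ F, ∀ y ∈ X, IsTopExtendable F (X.erase y)

lemma IsDecomp.exists_isDecomp_insert_union (hF : HasTopReplacement F) {P : Fin r → Finset ℕ}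
    (hP : IsDecomp F P) (h1 : finLE 1 (univ.biUnion P)) {W : Finset ℕ}
    (hW : IsTopExtendable F W) (hWP : finLT W (univ.biUnion P)) {m : ℕ} (hm : 1 ≤ m)
    (hmW : ∀ x ∈ W ∪ univ.biUnion P, x < m) :
    ∃ Q : Fin (r + 1) → Finset ℕ, IsDecomp F Q ∧
      univ.biUnion Q = insert m (W ∪ univ.biUnion P) := by
  induction r generalizing W with
  | zero =>
    have hP0 : univ.biUnion P = ∅ := by simp
    rw [hP0, union_empty] at hmW ⊢
    refine ⟨Fin.cons (insert m W) P, isDecomp_cons.2 ⟨hW m hm hmW, insert_nonempty _ _, ?_,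
      isDecomp_zero P⟩, by rw [biUnion_cons, hP0, union_empty]⟩
    simp [finLT]
  | succ r ih =>
    obtain ⟨E, T, rfl⟩ : ∃ E T, P = Fin.cons E T := ⟨_, _, (Fin.cons_self_tail P).symm⟩
    obtain ⟨hEF, hE, hET, hT⟩ := isDecomp_cons.1 hP
    rw [biUnion_cons] at h1 hWP hmW ⊢
    set c := E.min' hE
    have hcE : c ∈ E := E.min'_mem hE
    have hcW : ∀ w ∈ W, w < c := fun w hw => hWP w hw c (mem_union_left _ hcE)
    have hcm : c < m := hmW c (by simp [hcE])
    obtain ⟨Q, hQ, hQU⟩ := ih hT (fun x hx => h1 x (mem_union_right _ hx)) (hF E hEF c hcE)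
      (fun a ha => hET a (mem_of_mem_erase ha))
      (fun x hx => hmW x (mem_union_right W (union_subset_union_left (erase_subset c E) hx)))
    refine ⟨Fin.cons (insert c W) Q, isDecomp_cons.2 ⟨hW c (h1 c (mem_union_left _ hcE)) hcW,
      insert_nonempty _ _, ?_, hQ⟩, ?_⟩
    · rw [hQU]
      intro a ha b hb
      have hac : a ≤ c := by
        rcases mem_insert.1 ha with rfl | ha
        exacts [le_rfl, (hcW a ha).le]
      refine hac.trans_lt ?_
      simp only [mem_insert, mem_union] at hb
      rcases hb with rfl | hb | hb
      exacts [hcm, E.min'_lt_of_mem_erase_min' hE hb, hET c hcE b hb]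
    · rw [biUnion_cons, hQU, insert_union, union_insert, insert_comm c m, ← union_insert c W,
        ← insert_union c (E.erase c), insert_erase hcE]

lemma IsDecomp.exists_isDecomp_insert_update (hF : HasTopReplacement F) {P : Fin r → Finset ℕ}
    (hP : IsDecomp F P) (h1 : finLE 1 (univ.biUnion P)) {j : Fin r} {W : Finset ℕ}
    (hWj : W ⊆ P j) (hW : IsTopExtendable F W) {m : ℕ} (hm : 1 ≤ m)
    (hmW : ∀ x ∈ univ.biUnion (Function.update P j W), x < m) :
    ∃ Q : Fin r → Finset ℕ, IsDecomp F Q ∧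
      univ.biUnion Q = insert m (univ.biUnion (Function.update P j W)) := by
  induction r with
  | zero => exact j.elim0
  | succ r ih =>
    obtain ⟨E, T, rfl⟩ : ∃ E T, P = Fin.cons E T := ⟨_, _, (Fin.cons_self_tail P).symm⟩
    obtain ⟨hEF, hE, hET, hT⟩ := isDecomp_cons.1 hP
    rw [biUnion_cons] at h1
    induction j using Fin.cases with
    | zero =>
      rw [Fin.update_cons_zero, biUnion_cons] at hmW ⊢
      rw [Fin.cons_zero] at hWj
      exact hT.exists_isDecomp_insert_union hF (fun x hx => h1 x (mem_union_right _ hx)) hW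
        (fun a ha => hET a (hWj ha)) hm hmW
    | succ j =>
      rw [← Fin.cons_update, biUnion_cons] at hmW ⊢
      rw [Fin.cons_succ] at hWj
      have hUT : univ.biUnion (Function.update T j W) ⊆ univ.biUnion T := by
        intro x hx
        obtain ⟨i, -, hi⟩ := mem_biUnion.1 hx
        refine mem_biUnion.2 ⟨i, mem_univ _, ?_⟩
        rcases eq_or_ne i j with rfl | hij
        · exact hWj (by simpa using hi)
        · rwa [Function.update_of_ne hij] at hi
      obtain ⟨Q, hQ, hQU⟩ := ih hT (fun x hx => h1 x (mem_union_right _ hx)) hWj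
        (fun x hx => hmW x (mem_union_right _ hx))
      refine ⟨Fin.cons E Q, isDecomp_cons.2 ⟨hEF, hE, ?_, hQ⟩, ?_⟩
      · rw [hQU]
        intro a ha b hb
        rcases mem_insert.1 hb with rfl | hb
        exacts [hmW a (mem_union_left _ ha), hET a ha b (hUT hb)]
      · rw [biUnion_cons, hQU, union_insert]

lemma biUnion_update_erase {P : Fin r → Finset ℕ} (hP : Successive P) {j : Fin r}
    {y : ℕ} (hy : y ∈ P j) :
    univ.biUnion (Function.update P j ((P j).erase y)) = (univ.biUnion P).erase y := by
  ext x
  simp only [mem_biUnion, mem_univ, true_and, mem_erase]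
  constructor
  · rintro ⟨i, hi⟩
    rcases eq_or_ne i j with rfl | hij
    · simp only [Function.update_self, mem_erase] at hi
      exact ⟨hi.1, i, hi.2⟩
    · rw [Function.update_of_ne hij] at hi
      exact ⟨fun hxy => hP.notMem_of_ne hij.symm hy (hxy ▸ hi), i, hi⟩
  · rintro ⟨hxy, i, hi⟩
    refine ⟨i, ?_⟩
    rcases eq_or_ne i j with rfl | hij
    · simpa [hxy] using hi
    · rwa [Function.update_of_ne hij]

lemma singleton_mem_succStep {k : ℕ} (hk : 1 ≤ k) (hkF : {k} ∈ F) : {k} ∈ succStep F :=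
  mem_succStep_iff.2 ⟨1, fun _ => {k},
    ⟨fun _ => hkF, fun _ => singleton_nonempty k,
      fun i j hij => absurd hij (by simp [Subsingleton.elim i j])⟩,
    fun a ha => (mem_singleton.1 ha) ▸ hk, by simp⟩

lemma hasTopReplacement_succStep (hF1 : ∀ k, 1 ≤ k → {k} ∈ F) (hF : HasTopReplacement F) :
    HasTopReplacement (succStep F) := by
  intro X hX y hy c hc hcX
  obtain ⟨x, hx⟩ | hXy := (X.erase y).eq_empty_or_nonempty.symm
  · obtain ⟨r, P, hP, hle, rfl⟩ := mem_succStep_iff.1 hX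
    obtain ⟨j, -, hyj⟩ := mem_biUnion.1 hy
    have hU := biUnion_update_erase hP.successive hyj
    obtain ⟨Q, hQ, hQU⟩ := hP.exists_isDecomp_insert_update hF
      (fun a ha => j.pos.trans_le (hle a ha)) (erase_subset y (P j))
      (hF (P j) (hP.mem j) y hyj) hc (hU ▸ hcX)
    rw [hU] at hQU
    refine mem_succStep_iff.2 ⟨r, Q, hQ, fun a ha => ?_, hQU.symm⟩
    rcases mem_insert.1 ha with rfl | ha
    exacts [(hle x (mem_of_mem_erase hx)).trans (hcX x hx).le, hle a (mem_of_mem_erase ha)]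
  · rw [hXy, insert_empty]
    exact singleton_mem_succStep hc (hF1 c hc)

lemma MaxIn.mem_of_insert_mem {A : Finset ℕ} (hA : MaxIn F A) {a : ℕ} (ha : insert a A ∈ F) :
    a ∈ A :=
  hA.2 _ ha (subset_insert a A) ▸ mem_insert_self a A

lemma disjoint_of_finLT {E Z : Finset ℕ} (h : finLT E Z) : Disjoint E Z :=
  disjoint_left.2 fun a ha haZ => (h a ha a haZ).false

lemma subset_or_subset_of_union_eq {E Z E' Z' : Finset ℕ} (h : finLT E Z) (h' : finLT E' Z')
    (hU : E ∪ Z = E' ∪ Z') : E ⊆ E' ∨ E' ⊆ E := by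
  by_contra! hcon
  obtain ⟨⟨x, hxE, hxE'⟩, ⟨x', hx'E', hx'E⟩⟩ := And.imp not_subset.1 not_subset.1 hcon
  have hxZ' : x ∈ Z' := (mem_union.1 (hU ▸ mem_union_left Z hxE)).resolve_left hxE'
  have hx'Z : x' ∈ Z := (mem_union.1 (hU ▸ mem_union_left Z' hx'E')).resolve_left hx'E
  exact (h x hxE x' hx'Z).asymm (h' x' hx'E' x hxZ')

lemma eq_of_maxIn_of_biUnion_eq {E G : Fin r → Finset ℕ} (hE : ∀ i, MaxIn F (E i))
    (hG : ∀ i, MaxIn F (G i)) (hEs : Successive E) (hGs : Successive G)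
    (hU : univ.biUnion E = univ.biUnion G) : E = G := by
  induction r with
  | zero => exact funext fun i => i.elim0
  | succ r ih =>
    obtain ⟨e, T, rfl⟩ : ∃ e T, E = Fin.cons e T := ⟨_, _, (Fin.cons_self_tail E).symm⟩
    obtain ⟨g, V, rfl⟩ : ∃ g V, G = Fin.cons g V := ⟨_, _, (Fin.cons_self_tail G).symm⟩
    obtain ⟨heT, hT⟩ := successive_cons.1 hEs
    obtain ⟨hgV, hV⟩ := successive_cons.1 hGs
    rw [biUnion_cons, biUnion_cons] at hU
    have he : MaxIn F e := by simpa using hE 0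
    have hg : MaxIn F g := by simpa using hG 0
    obtain rfl : e = g := (subset_or_subset_of_union_eq heT hgV hU).elim
      (fun h => (he.2 g hg.1 h).symm) (fun h => hg.2 e he.1 h)
    have hTV : univ.biUnion T = univ.biUnion V := by
      rw [← union_sdiff_cancel_left (disjoint_of_finLT heT),
        ← union_sdiff_cancel_left (disjoint_of_finLT hgV), hU]
    rw [ih (fun i => by simpa using hE i.succ) (fun i => by simpa using hG i.succ) hT hV hTV]

lemma IsDecomp.eq_min'_of_maxIn_succStep (hF1 : ∀ k, 1 ≤ k → {k} ∈ F) {A : Finset ℕ}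
    (hA : MaxIn (succStep F) A) (hAne : A.Nonempty) {P : Fin r → Finset ℕ}
    (hP : IsDecomp F P) (hle : finLE r A) (hAP : A = univ.biUnion P) : r = A.min' hAne := by
  refine (hle _ (A.min'_mem hAne)).antisymm (not_lt.1 fun hlt => ?_)
  obtain ⟨M, hM⟩ := A.exists_nat_subset_range
  have hAM : ∀ x ∈ A, x < M := fun x hx => mem_range.1 (hM hx)
  have hrM : r + 1 ≤ M := hlt.trans_le (A.min'_le _ (A.min'_mem hAne)) |>.trans
    (hAM _ (A.min'_mem hAne))
  have hins : insert M A ∈ succStep F := by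
    refine mem_succStep_iff.2 ⟨r + 1, Fin.snoc P {M}, hP.snoc (hF1 M (by omega))
      (singleton_nonempty M) fun a ha b hb => ?_, fun x hx => ?_, ?_⟩
    · rw [mem_singleton.1 hb]
      exact hAM a (hAP ▸ ha)
    · rcases mem_insert.1 hx with rfl | hx
      exacts [hrM, hlt.trans_le (A.min'_le x hx)]
    · rw [biUnion_snoc, ← hAP, union_comm, ← insert_eq]
  exact (hAM M (hA.mem_of_insert_mem hins)).false

lemma IsDecomp.maxIn_of_maxIn_succStep (hFl : IsLowerSet F) (hF : HasTopReplacement F)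
    {A : Finset ℕ} (hA : MaxIn (succStep F) A) {P : Fin r → Finset ℕ}
    (hP : IsDecomp F P) (hle : finLE r A) (hAP : A = univ.biUnion P) (i : Fin r) :
    MaxIn F (P i) := by
  refine ⟨hP.mem i, fun B hB hiB => ?_⟩
  by_contra hne
  obtain ⟨b, hbB, hbi⟩ := exists_of_ssubset (ssubset_of_subset_of_ne hiB (Ne.symm hne))
  have hW : IsTopExtendable F (P i) := by
    simpa [erase_insert hbi] using
      hF _ (hFl (insert_subset hbB hiB) hB) b (mem_insert_self b (P i))
  obtain ⟨M, hM⟩ := A.exists_nat_subset_range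
  have hAM : ∀ x ∈ A, x < M := fun x hx => mem_range.1 (hM hx)
  obtain ⟨x, hx⟩ := hP.nonempty i
  have hxA : x ∈ A := hAP ▸ mem_biUnion.2 ⟨i, mem_univ _, hx⟩
  have hrM : r ≤ M := (hle x hxA).trans (hAM x hxA).le
  obtain ⟨Q, hQ, hQU⟩ := hP.exists_isDecomp_insert_update hF
    (fun a ha => i.pos.trans_le (hle a (hAP ▸ ha))) subset_rfl hW (i.pos.trans_le hrM)
    (by rwa [Function.update_eq_self, ← hAP])
  rw [Function.update_eq_self, ← hAP] at hQU
  have hins : insert M A ∈ succStep F := by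
    refine mem_succStep_iff.2 ⟨r, Q, hQ, fun a ha => ?_, hQU.symm⟩
    rcases mem_insert.1 ha with rfl | ha
    exacts [hrM, hle a ha]
  exact (hAM M (hA.mem_of_insert_mem hins)).false

end Decomp

namespace SchreierSystem

variable (𝒮 : SchreierSystem)

theorem induction {motive : Ordinal → Prop} (zero : motive 0)
    (succ : ∀ β, β < omegaOne → motive β → motive (β + 1))
    (limit : ∀ ξ, Order.IsSuccLimit ξ → ξ < omegaOne →
      (∀ n, 1 ≤ n → motive (𝒮.α ξ n)) → motive ξ) :
    ∀ γ < omegaOne, motive γ := by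
  intro γ
  induction γ using Ordinal.limitRecOn with
  | zero => exact fun _ => zero
  | add_one β ih =>
    intro hβ
    have hβ' : β < omegaOne := (lt_add_one β).trans hβ
    exact succ β hβ' (ih hβ')
  | limit ξ hξ ih =>
    exact fun hξω => limit ξ hξ hξω fun n hn =>
      ih _ (𝒮.α_lt ξ hξ hξω n hn) ((𝒮.α_lt ξ hξ hξω n hn).trans hξω)

theorem singleton_mem {γ : Ordinal} (hγ : γ < omegaOne) {k : ℕ} (hk : 1 ≤ k) : {k} ∈ 𝒮.S γ := by
  refine 𝒮.induction (motive := fun γ => ∀ k, 1 ≤ k → {k} ∈ 𝒮.S γ) ?_ ?_ ?_ γ hγ k hk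
  · intro k _
    rw [𝒮.S_zero]
    exact Or.inr ⟨k, rfl⟩
  · intro β _ ih k hk
    rw [𝒮.S_succ]
    exact singleton_mem_succStep hk (ih k hk)
  · intro ξ hξ hξω ih k hk
    rw [𝒮.S_limit ξ hξ hξω]
    exact ⟨1, le_rfl, fun a ha => (mem_singleton.1 ha) ▸ hk, ih 1 le_rfl k hk⟩

theorem isLowerSet {γ : Ordinal} (hγ : γ < omegaOne) : IsLowerSet (𝒮.S γ) := by
  refine 𝒮.induction (motive := fun γ => IsLowerSet (𝒮.S γ)) ?_ ?_ ?_ γ hγ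
  · intro A B hBA hA
    rw [𝒮.S_zero] at hA ⊢
    rcases hA with rfl | ⟨n, rfl⟩
    · exact Or.inl (subset_empty.1 hBA)
    · exact (subset_singleton_iff.1 hBA).imp id fun h => ⟨n, h⟩
  · intro β _ ih
    rw [𝒮.S_succ]
    exact isLowerSet_succStep ih
  · intro ξ hξ hξω ih A B hBA hA
    rw [𝒮.S_limit ξ hξ hξω] at hA ⊢
    obtain ⟨n, hn, hnA, hA⟩ := hA
    exact ⟨n, hn, fun b hb => hnA b (hBA hb), ih n hn hBA hA⟩

theorem hasTopReplacement {γ : Ordinal} (hγ : γ < omegaOne) : HasTopReplacement (𝒮.S γ) := by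
  refine 𝒮.induction (motive := fun γ => HasTopReplacement (𝒮.S γ)) ?_ ?_ ?_ γ hγ
  · intro X hX y hy c hc _
    rw [𝒮.S_zero] at hX ⊢
    obtain ⟨n, rfl⟩ := hX.resolve_left (ne_empty_of_mem hy)
    rw [mem_singleton.1 hy, erase_singleton, insert_empty]
    exact Or.inr ⟨c, rfl⟩
  · intro β hβ ih
    rw [𝒮.S_succ]
    exact hasTopReplacement_succStep (fun k hk => 𝒮.singleton_mem hβ hk) ih
  · intro ξ hξ hξω ih X hX y hy c hc hcX
    obtain ⟨x, hx⟩ | hXy := (X.erase y).eq_empty_or_nonempty.symm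
    · rw [𝒮.S_limit ξ hξ hξω] at hX ⊢
      obtain ⟨n, hn, hnX, hX⟩ := hX
      refine ⟨n, hn, fun a ha => ?_, ih n hn X hX y hy c hc hcX⟩
      rcases mem_insert.1 ha with rfl | ha
      exacts [(hnX x (mem_of_mem_erase hx)).trans (hcX x hx).le, hnX a (mem_of_mem_erase ha)]
    · rw [hXy, insert_empty]
      exact 𝒮.singleton_mem hξω hc

end SchreierSystem

/-- If `0 < ξ = γ+1 < ω₁` and `A ∈ MAX(S_ξ)`, then there are unique
elements `A_1 < A_2 < ⋯ < A_{min A}` of `MAX(S_γ)` whose union is `A`. -/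
theorem maximal_decomposition (𝒮 : SchreierSystem) (γ : Ordinal)
    (hγ : γ + 1 < omegaOne) (A : Finset ℕ) (hA : MaxIn (𝒮.S (γ + 1)) A)
    (hAne : A.Nonempty) :
    ∃! E : Fin (A.min' hAne) → Finset ℕ,
      (∀ i, MaxIn (𝒮.S γ) (E i)) ∧ (∀ i, (E i).Nonempty) ∧
      (∀ i j, i < j → finLT (E i) (E j)) ∧ A = Finset.univ.biUnion E := by
  have hγ' : γ < omegaOne := (lt_add_one γ).trans hγ
  rw [𝒮.S_succ] at hA
  obtain ⟨r, P, hP, hle, hAP⟩ := mem_succStep_iff.1 hA.1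
  obtain rfl := hP.eq_min'_of_maxIn_succStep (fun k hk => 𝒮.singleton_mem hγ' hk) hA hAne hle hAP
  have hmax := hP.maxIn_of_maxIn_succStep (𝒮.isLowerSet hγ') (𝒮.hasTopReplacement hγ') hA hle hAP
  refine ⟨P, ⟨hmax, hP.nonempty, hP.successive, hAP⟩, ?_⟩
  rintro G ⟨hGmax, -, hGs, hGA⟩
  exact eq_of_maxIn_of_biUnion_eq hGmax hmax hGs hP.successive (hGA ▸ hAP)
end
end

section
/- (Replacement lemma) Let ξ < ω₁, A ∈ MAX(S_ξ), and a ∈ A with a > min A. Put m₁ = max{max D : D ∈ T(ξ,A), D < D_{ξ,A}(a)} and m₂ = min{min D : D ∈ T(ξ,A), D > D_{ξ,A}(a)} (with m₂ = ∞ if no node of T(ξ,A) lies after D_{ξ,A}(a)). Let E be the immediate predecessor of D_{ξ,A}(a) in T(ξ,A) and write order_{ξ,A}(E) = γ + 1. Then for every D̃ ∈ MAX(S_γ) with D̃ ⊆ (m₁, m₂), the set (A \ D_{ξ,A}(a)) ∪ D̃ belongs to MAX(S_ξ). -/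
noncomputable section

open scoped Classical

/-- Membership `(D, β) ∈ T(ξ, A)`: `D` is a node of the `ξ`-analysis tree of the
maximal `S_ξ` set `A`, and `β` is its order `order_{ξ,A}(D)`.  The clauses follow the
recursive definition of the `ξ`-analysis: for `ξ = 0` the tree of `{a}` is `{{a}}` with
order `0`; for `ξ = γ+1` the tree consists of the root `A` (of order `ξ`) together with
the trees of the members of the (unique) decomposition of `A` into `min A` consecutive
maximal `S_γ` sets; for `ξ` a limit ordinal, `T(ξ,A) = T(α(ξ, min A), A)`. -/
inductive AnalysisMem (𝒮 : SchreierSystem) : Ordinal → Finset ℕ → Finset ℕ → Ordinal → Prop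
  | zero (a : ℕ) : AnalysisMem 𝒮 0 {a} {a} 0
  | succRoot (γ : Ordinal) (A : Finset ℕ) (hA : MaxIn (𝒮.S (γ + 1)) A) :
      AnalysisMem 𝒮 (γ + 1) A A (γ + 1)
  | succChild (γ : Ordinal) (A : Finset ℕ) (hA : MaxIn (𝒮.S (γ + 1)) A)
      (k : ℕ) (E : Fin k → Finset ℕ)
      (hkmem : k ∈ A) (hkmin : finLE k A)
      (hE : ∀ i, MaxIn (𝒮.S γ) (E i)) (hne : ∀ i, (E i).Nonempty)
      (hlt : ∀ i j : Fin k, i < j → finLT (E i) (E j))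
      (hU : A = Finset.univ.biUnion E)
      (i : Fin k) (D : Finset ℕ) (β : Ordinal)
      (h : AnalysisMem 𝒮 γ (E i) D β) :
      AnalysisMem 𝒮 (γ + 1) A D β
  | limit (ξ : Ordinal) (hξ : Order.IsSuccLimit ξ) (A : Finset ℕ) (hA : MaxIn (𝒮.S ξ) A)
      (hne : A.Nonempty) (D : Finset ℕ) (β : Ordinal)
      (h : AnalysisMem 𝒮 (𝒮.α ξ (A.min' hne)) A D β) :
      AnalysisMem 𝒮 ξ A D β

/-- `D` is a node of the `ξ`-analysis tree `T(ξ, A)`. -/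
def IsNode (𝒮 : SchreierSystem) (ξ : Ordinal) (A D : Finset ℕ) : Prop :=
  ∃ β : Ordinal, AnalysisMem 𝒮 ξ A D β


/-!
The analysis tree below a node `E` of order `γ + 1` is built from the unique decomposition of
`E` into `min E` consecutive maximal `S_γ` blocks, and `D₀` turns out to be one of these blocks,
but not the first one (otherwise `E` would be a node with minimum `a` above `D₀`). Swapping it for
`D'` gives another such decomposition, so `E' = (E \ D₀) ∪ D'` is maximal in `S_{γ+1}` and has the
same minimum as `E`. The replacement then propagates from `E` up to the root: at a successor
level the modified block still sits between its neighbours, so the parent still decomposes into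
consecutive maximal blocks, and at a limit level the minimum, hence the approximating ordinal,
is unchanged. Maximality is tested throughout by one-point extensions, which by spreading may be
taken arbitrarily far to the right.
-/
open Finset

theorem finLT.mono {A B A' B' : Finset ℕ} (h : finLT A B) (hA : A' ⊆ A) (hB : B' ⊆ B) :
    finLT A' B' := fun a ha b hb => h a (hA ha) b (hB hb)

theorem finLT.notMem {A B : Finset ℕ} (h : finLT A B) {x : ℕ} (hA : x ∈ A) : x ∉ B :=
  fun hB => lt_irrefl x (h x hA x hB)

theorem finLT.union_right {A B C : Finset ℕ} (hB : finLT A B) (hC : finLT A C) :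
    finLT A (B ∪ C) := fun a ha x hx => (mem_union.mp hx).elim (hB a ha x) (hC a ha x)

theorem finLT.union_left {A B C : Finset ℕ} (hA : finLT A C) (hB : finLT B C) :
    finLT (A ∪ B) C := fun x hx => (mem_union.mp hx).elim (hA x) (hB x)

theorem finLE.insert {m M : ℕ} {X : Finset ℕ} (hmX : finLE m X) (hM : m ≤ M) :
    finLE m (insert M X) :=
  fun x hx => (mem_insert.mp hx).elim (· ▸ hM) (hmX x)

theorem min_eq_of_finLE {k : ℕ} {E : Finset ℕ} (hk : k ∈ E) (hkE : finLE k E) : E.min = k :=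
  le_antisymm (min_le hk) (Finset.le_min fun x hx => WithTop.coe_le_coe.mpr (hkE x hx))

theorem finLE.of_min_eq {k : ℕ} {E E' : Finset ℕ} (hkE : finLE k E) (hmin : E'.min = E.min) :
    finLE k E' := by
  intro x hx
  obtain ⟨m, hm⟩ := min_of_mem hx
  have hmE : m ∈ E := mem_of_min (hmin ▸ hm)
  exact (hkE m hmE).trans (WithTop.coe_le_coe.mp (hm ▸ min_le hx))

theorem mem_of_min_eq {k : ℕ} {E E' : Finset ℕ} (hk : k ∈ E) (hkE : finLE k E)
    (hmin : E'.min = E.min) : k ∈ E' :=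
  mem_of_min (hmin.trans (min_eq_of_finLE hk hkE))

theorem sdiff_union_sdiff_union {A E D D' : Finset ℕ} (hDE : D ⊆ E) (hEA : E ⊆ A) :
    (A \ E) ∪ ((E \ D) ∪ D') = (A \ D) ∪ D' := by
  ext x
  have := @hDE x
  have := @hEA x
  simp only [mem_union, mem_sdiff]
  tauto

theorem lt_omegaOne_of_add_one_lt {γ : Ordinal} (h : γ + 1 < omegaOne) : γ < omegaOne :=
  (lt_add_one γ).trans h

def IsSpreading (F : Set (Finset ℕ)) : Prop :=
  ∀ A ∈ F, ∀ f : ℕ → ℕ, StrictMonoOn f ↑A → (∀ x ∈ A, x ≤ f x) → A.image f ∈ F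

theorem mem_succStep_of_mem {F : Set (Finset ℕ)} {X : Finset ℕ} (hX : X ∈ F) (hne : X.Nonempty)
    (h1 : finLE 1 X) : X ∈ succStep F :=
  ⟨1, fun _ => X, fun _ => hX, fun _ => hne, fun i j h => absurd (Subsingleton.elim i j) h.ne,
    fun _ => h1, by simp⟩

theorem IsLowerSet.succStep {F : Set (Finset ℕ)} (hF : IsLowerSet F) :
    IsLowerSet (succStep F) := by
  rintro B A hAB ⟨n, E, hEF, -, hElt, hEn, rfl⟩
  set s := univ.filter fun i => (A ∩ E i).Nonempty
  set e := s.orderEmbOfFin rfl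
  refine ⟨s.card, fun j => A ∩ E (e j), fun j => hF inter_subset_right (hEF _),
    fun j => (mem_filter.mp (s.orderEmbOfFin_mem rfl j)).2,
    fun i j hij => (hElt _ _ (e.strictMono hij)).mono inter_subset_right inter_subset_right,
    fun j x hx => (card_le_univ s).trans (by simpa using hEn _ x (mem_inter.mp hx).2), ?_⟩
  ext x
  simp only [mem_biUnion, mem_univ, true_and, mem_inter]
  refine ⟨fun hx => ?_, fun ⟨j, hx, _⟩ => hx⟩
  obtain ⟨i, hi⟩ := mem_biUnion.mp (hAB hx)
  have his : i ∈ (s : Set (Fin n)) := mem_filter.mpr ⟨mem_univ i, x, mem_inter.mpr ⟨hx, hi.2⟩⟩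
  rw [← s.range_orderEmbOfFin rfl] at his
  obtain ⟨j, rfl⟩ := his
  exact ⟨j, hx, hi.2⟩

theorem IsSpreading.succStep {F : Set (Finset ℕ)} (hF : IsSpreading F) :
    IsSpreading (succStep F) := by
  rintro B ⟨n, E, hEF, hEne, hElt, hEn, rfl⟩ f hf hle
  have hsub : ∀ i, E i ⊆ univ.biUnion E := fun i => subset_biUnion_of_mem E (mem_univ i)
  refine ⟨n, fun i => (E i).image f,
    fun i => hF _ (hEF i) f (hf.mono (coe_subset.mpr (hsub i))) (fun x hx => hle x (hsub i hx)),
    fun i => (hEne i).image f, fun i j hij => ?_, fun i => ?_, biUnion_image⟩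
  · simp only [finLT, mem_image]
    rintro _ ⟨x, hx, rfl⟩ _ ⟨y, hy, rfl⟩
    exact hf (by simpa using hsub i hx) (by simpa using hsub j hy) (hElt i j hij x hx y hy)
  · simp only [finLE, mem_image]
    rintro _ ⟨x, hx, rfl⟩
    exact (hEn i x hx).trans (hle x (hsub i hx))

theorem IsSpreading.insert_mem {F : Set (Finset ℕ)} (hF : IsSpreading F) {X : Finset ℕ}
    {z M : ℕ} (hz : z ∉ X) (h : insert z X ∈ F) (hM : ∀ x ∈ insert z X, x < M) :
    insert M X ∈ F := by
  set T := insert z X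
  set T' := insert M X
  let f : ℕ → ℕ := fun y => if y < z then y else sInf {w | w ∈ T' ∧ y < w}
  have hzM : z < M := hM z (mem_insert_self z X)
  have hXT' : ∀ {x}, x ∈ T → x ≠ z → x ∈ T' := fun hx hxz =>
    mem_insert_of_mem ((mem_insert.mp hx).resolve_left hxz)
  have hnext : ∀ y ∈ T, ¬ y < z →
      f y ∈ T' ∧ y < f y ∧ ∀ w ∈ T', y < w → f y ≤ w := by
    intro y hy hyz
    have hne : {w | w ∈ T' ∧ y < w}.Nonempty := ⟨M, mem_insert_self M X, hM y hy⟩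
    simp only [f, if_neg hyz]
    exact ⟨(Nat.sInf_mem hne).1, (Nat.sInf_mem hne).2, fun w hw hyw => Nat.sInf_le ⟨hw, hyw⟩⟩
  have hle : ∀ y ∈ T, y ≤ f y := by
    intro y hy
    by_cases hyz : y < z
    · simp [f, hyz]
    · exact (hnext y hy hyz).2.1.le
  have hmono : StrictMonoOn f ↑T := by
    intro x hx y hy hxy
    rw [mem_coe] at hx hy
    by_cases hxz : x < z
    · by_cases hyz : y < z
      · simpa [f, hxz, hyz] using hxy
      · simp only [f, if_pos hxz]
        exact hxy.trans (hnext y hy hyz).2.1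
    · have hyz : ¬ y < z := by omega
      exact ((hnext x hx hxz).2.2 y (hXT' hy (by omega)) hxy).trans_lt (hnext y hy hyz).2.1
  have himage : T.image f = T' := by
    apply Subset.antisymm
    · intro w hw
      obtain ⟨y, hy, rfl⟩ := mem_image.mp hw
      by_cases hyz : y < z
      · simpa [f, hyz] using hXT' hy hyz.ne
      · exact (hnext y hy hyz).1
    · intro w hw
      have hwX : w ≠ M → w ∈ X := fun h => (mem_insert.mp hw).resolve_left h
      have hwM : w ≤ M := by
        rcases mem_insert.mp hw with rfl | hw
        · rfl
        · exact (hM w (mem_insert_of_mem hw)).le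
      by_cases hwz : w < z
      · refine mem_image.mpr ⟨w, mem_insert_of_mem (hwX (by omega)), ?_⟩
        simp [f, hwz]
      · -- the preimage of `w` is the last element of `T` before `w`
        have hzw : z < w := lt_of_le_of_ne (not_lt.mp hwz) fun h => hz (h ▸ hwX (by omega))
        have hP : (T.filter (· < w)).Nonempty := ⟨z, mem_filter.mpr ⟨mem_insert_self z X, hzw⟩⟩
        obtain ⟨hpT, hpw⟩ := mem_filter.mp ((T.filter (· < w)).max'_mem hP)
        set p := (T.filter (· < w)).max' hP
        have hpz : ¬ p < z := not_lt.mpr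
          ((T.filter (· < w)).le_max' z (mem_filter.mpr ⟨mem_insert_self z X, hzw⟩))
        obtain ⟨hfpT', hpfp, hfp_le⟩ := hnext p hpT hpz
        refine mem_image.mpr ⟨p, hpT, le_antisymm (hfp_le w hw hpw) (not_lt.mp fun hlt => ?_)⟩
        have hfpT : f p ∈ T := mem_insert_of_mem ((mem_insert.mp hfpT').resolve_left (by omega))
        exact absurd ((T.filter (· < w)).le_max' _ (mem_filter.mpr ⟨hfpT, hlt⟩)) (not_le.mpr hpfp)
  exact himage ▸ hF T h f hmono hle

theorem MaxIn.insert_notMem {F : Set (Finset ℕ)} {X : Finset ℕ} (hX : MaxIn F X) {z : ℕ}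
    (hz : z ∉ X) : insert z X ∉ F :=
  fun h => hz (hX.2 _ h (subset_insert z X) ▸ mem_insert_self z X)

theorem maxIn_of_forall_insert_notMem {F : Set (Finset ℕ)} (hF : IsLowerSet F)
    (hs : IsSpreading F) {X : Finset ℕ} (hX : X ∈ F) (N : ℕ)
    (h : ∀ M, N ≤ M → (∀ x ∈ X, x < M) → insert M X ∉ F) : MaxIn F X := by
  refine ⟨hX, fun B hB hXB => ?_⟩
  by_contra hBX
  obtain ⟨z, hzB, hzX⟩ := exists_of_ssubset (ssubset_of_subset_of_ne hXB (Ne.symm hBX))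
  have hlt : ∀ x ∈ insert z X, x < N + (insert z X).sup id + 1 := fun x hx => by
    have := le_sup (f := id) hx; simp only [id] at this; omega
  exact h _ (by omega) (fun x hx => hlt x (mem_insert_of_mem hx))
    (hs.insert_mem hzX (hF (insert_subset hzB hXB) hB) hlt)

structure IsBlockDecomp (F : Set (Finset ℕ)) (X : Finset ℕ) {k : ℕ} (C : Fin k → Finset ℕ) :
    Prop where
  maxIn : ∀ i, MaxIn F (C i)
  nonempty : ∀ i, (C i).Nonempty
  finLT_of_lt : ∀ i j, i < j → finLT (C i) (C j)
  eq_biUnion : X = univ.biUnion C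

namespace IsBlockDecomp

variable {F : Set (Finset ℕ)} {X : Finset ℕ} {k : ℕ} {C C' : Fin k → Finset ℕ}

theorem mem_iff (h : IsBlockDecomp F X C) {x : ℕ} : x ∈ X ↔ ∃ i, x ∈ C i := by
  simp [h.eq_biUnion]

theorem subset (h : IsBlockDecomp F X C) (i : Fin k) : C i ⊆ X :=
  fun _ hx => h.mem_iff.mpr ⟨i, hx⟩

theorem eq_of_mem (h : IsBlockDecomp F X C) {i j : Fin k} {x : ℕ} (hi : x ∈ C i)
    (hj : x ∈ C j) : i = j := by
  by_contra hij
  rcases lt_or_gt_of_ne hij with hlt | hlt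
  exacts [(h.finLT_of_lt i j hlt).notMem hi hj, (h.finLT_of_lt j i hlt).notMem hj hi]

theorem update (h : IsBlockDecomp F X C) (i : Fin k) {B : Finset ℕ} (hB : MaxIn F B)
    (hBne : B.Nonempty) (hleft : ∀ p < i, finLT (C p) B)
    (hright : ∀ p, i < p → finLT B (C p)) :
    IsBlockDecomp F ((X \ C i) ∪ B) (Function.update C i B) where
  maxIn p := by
    rcases eq_or_ne p i with rfl | hp
    · simpa using hB
    · simpa [hp] using h.maxIn p
  nonempty p := by
    rcases eq_or_ne p i with rfl | hp
    · simpa using hBne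
    · simpa [hp] using h.nonempty p
  finLT_of_lt p q hpq := by
    rcases eq_or_ne p i with rfl | hp
    · rw [Function.update_self, Function.update_of_ne hpq.ne']
      exact hright q hpq
    rcases eq_or_ne q i with rfl | hq
    · rw [Function.update_of_ne hp, Function.update_self]
      exact hleft p hpq
    · rw [Function.update_of_ne hp, Function.update_of_ne hq]
      exact h.finLT_of_lt p q hpq
  eq_biUnion := by
    ext x
    simp only [mem_union, mem_sdiff, mem_biUnion, mem_univ, true_and]
    constructor
    · rintro (⟨hxX, hxi⟩ | hxB)
      · obtain ⟨p, hp⟩ := h.mem_iff.mp hxX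
        have hpi : p ≠ i := by rintro rfl; exact hxi hp
        exact ⟨p, by rwa [Function.update_of_ne hpi]⟩
      · exact ⟨i, by rwa [Function.update_self]⟩
    · rintro ⟨p, hp⟩
      rcases eq_or_ne p i with rfl | hpi
      · rw [Function.update_self] at hp
        exact Or.inr hp
      · rw [Function.update_of_ne hpi] at hp
        exact Or.inl ⟨h.subset p hp, fun hi => hpi (h.eq_of_mem hp hi)⟩

/-- Once the first `i` blocks of two decompositions agree, the `i`-th blocks start at the same
point. -/
theorem subset_of_mem_of_notMem (h : IsBlockDecomp F X C) (h' : IsBlockDecomp F X C')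
    {i : Fin k} (hprev : ∀ j < i, C j = C' j) {x : ℕ} (hx : x ∈ C i) (hx' : x ∉ C' i) :
    C' i ⊆ C i := by
  obtain ⟨j, hj⟩ := h'.mem_iff.mp (h.subset i hx)
  have hij : i < j := by
    rcases lt_trichotomy j i with hji | rfl | hij
    · rw [← hprev j hji] at hj
      exact absurd (h.eq_of_mem hx hj) hji.ne'
    · exact absurd hj hx'
    · exact hij
  intro y hy
  obtain ⟨j', hj'⟩ := h.mem_iff.mp (h'.subset i hy)
  rcases lt_trichotomy j' i with hji | rfl | hij'
  · rw [hprev j' hji] at hj'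
    exact absurd (h'.eq_of_mem hy hj') hji.ne'
  · exact hj'
  · exact absurd (h.finLT_of_lt i j' hij' x hx y hj')
      (not_lt.mpr (h'.finLT_of_lt i j hij y hy x hj).le)

theorem eq (h : IsBlockDecomp F X C) (h' : IsBlockDecomp F X C') : C = C' := by
  funext i
  induction i using WellFoundedLT.induction with
  | _ i ih =>
    by_cases hsub : C i ⊆ C' i
    · exact ((h.maxIn i).2 _ (h'.maxIn i).1 hsub).symm
    · obtain ⟨x, hx, hx'⟩ := not_subset.mp hsub
      exact (h'.maxIn i).2 _ (h.maxIn i).1 (h.subset_of_mem_of_notMem h' ih hx hx')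

theorem mem_succStep (h : IsBlockDecomp F X C) (hkX : finLE k X) : X ∈ succStep F :=
  ⟨k, C, fun i => (h.maxIn i).1, h.nonempty, h.finLT_of_lt, fun i x hx => hkX x (h.subset i hx),
    h.eq_biUnion⟩

theorem maxIn_succStep (hF : IsLowerSet F) (hs : IsSpreading F) (h : IsBlockDecomp F X C)
    (hk : k ∈ X) (hkX : finLE k X) : MaxIn (succStep F) X := by
  refine maxIn_of_forall_insert_notMem hF.succStep hs.succStep (h.mem_succStep hkX) 0 ?_
  rintro M - hMX ⟨n, D, hDF, -, hDlt, hDn, hMD⟩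
  have hmem : ∀ {y}, y ∈ insert M X → ∃ l, y ∈ D l := fun hy => by simpa [hMD] using hy
  have hnk : n ≤ k := by
    obtain ⟨l, hl⟩ := hmem (mem_insert_of_mem hk)
    exact hDn l k hl
  have key : ∀ l : Fin n, ∀ y ∈ D l, ∃ g ∈ C (Fin.castLE hnk l), y ≤ g := by
    intro l
    induction l using WellFoundedLT.induction with
    | _ l ih =>
      intro y hy
      by_contra! hyC
      -- then `C l` together with `y` would fit into the block `D l`
      have hCD : C (Fin.castLE hnk l) ⊆ D l := by
        intro g hg
        obtain ⟨j, hj⟩ := hmem (mem_insert_of_mem (h.subset _ hg))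
        rcases lt_trichotomy j l with hjl | rfl | hlj
        · obtain ⟨g', hg', hgg'⟩ := ih j hjl g hj
          exact absurd (h.finLT_of_lt _ _ ((Fin.castLE_lt_castLE_iff hnk).mpr hjl) g' hg' g hg)
            (not_lt.mpr hgg')
        · exact hj
        · exact absurd (hDlt l j hlj y hy g hj) (not_lt.mpr (hyC g hg).le)
      exact (h.maxIn _).insert_notMem (fun hy' => lt_irrefl y (hyC y hy'))
        (hF (insert_subset hy hCD) (hDF l))
  obtain ⟨l, hl⟩ := hmem (mem_insert_self M X)
  obtain ⟨g, hg, hMg⟩ := key l M hl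
  exact absurd (hMX g (h.subset _ hg)) (not_lt.mpr hMg)

end IsBlockDecomp

namespace SchreierSystem

variable (𝒮 : SchreierSystem)

theorem α_lt_omegaOne {ξ : Ordinal} (hlim : Order.IsSuccLimit ξ) (hξ : ξ < omegaOne) {n : ℕ}
    (hn : 1 ≤ n) : 𝒮.α ξ n < omegaOne :=
  (𝒮.α_lt ξ hlim hξ n hn).trans hξ

theorem isLowerSet_S {β : Ordinal} (hβ : β < omegaOne) : IsLowerSet (𝒮.S β) := by
  induction β using Ordinal.limitRecOn with
  | zero =>
    rw [𝒮.S_zero]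
    rintro B A hAB (rfl | ⟨n, rfl⟩)
    · exact Or.inl (subset_empty.mp hAB)
    · exact (subset_singleton_iff.mp hAB).imp id fun h => ⟨n, h⟩
  | add_one γ ih =>
    rw [𝒮.S_succ]
    exact (ih (lt_omegaOne_of_add_one_lt hβ)).succStep
  | limit ξ hlim ih =>
    rw [𝒮.S_limit ξ hlim hβ]
    rintro B A hAB ⟨n, hn, hnB, hB⟩
    exact ⟨n, hn, fun x hx => hnB x (hAB hx),
      ih _ (𝒮.α_lt ξ hlim hβ n hn) (𝒮.α_lt_omegaOne hlim hβ hn) hAB hB⟩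

theorem isSpreading_S {β : Ordinal} (hβ : β < omegaOne) : IsSpreading (𝒮.S β) := by
  induction β using Ordinal.limitRecOn with
  | zero =>
    rw [𝒮.S_zero]
    rintro A (rfl | ⟨n, rfl⟩) f - -
    · exact Or.inl (image_empty f)
    · exact Or.inr ⟨f n, image_singleton f n⟩
  | add_one γ ih =>
    rw [𝒮.S_succ]
    exact (ih (lt_omegaOne_of_add_one_lt hβ)).succStep
  | limit ξ hlim ih =>
    rw [𝒮.S_limit ξ hlim hβ]
    rintro A ⟨n, hn, hnA, hA⟩ f hf hle
    refine ⟨n, hn, ?_, ih _ (𝒮.α_lt ξ hlim hβ n hn) (𝒮.α_lt_omegaOne hlim hβ hn) A hA f hf hle⟩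
    simp only [finLE, mem_image]
    rintro _ ⟨x, hx, rfl⟩
    exact (hnA x hx).trans (hle x hx)

theorem singleton_mem_S {β : Ordinal} (hβ : β < omegaOne) {m : ℕ} (hm : 1 ≤ m) :
    {m} ∈ 𝒮.S β := by
  induction β using Ordinal.limitRecOn with
  | zero => rw [𝒮.S_zero]; exact Or.inr ⟨m, rfl⟩
  | add_one γ ih =>
    rw [𝒮.S_succ]
    exact mem_succStep_of_mem (ih (lt_omegaOne_of_add_one_lt hβ)) (singleton_nonempty m)
      (by simpa [finLE] using hm)
  | limit ξ hlim ih =>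
    rw [𝒮.S_limit ξ hlim hβ]
    exact ⟨1, le_rfl, by simpa [finLE] using hm,
      ih _ (𝒮.α_lt ξ hlim hβ 1 le_rfl) (𝒮.α_lt_omegaOne hlim hβ le_rfl)⟩

theorem nonempty_of_maxIn {β : Ordinal} (hβ : β < omegaOne) {X : Finset ℕ}
    (hX : MaxIn (𝒮.S β) X) : X.Nonempty := by
  rw [nonempty_iff_ne_empty]
  rintro rfl
  exact singleton_ne_empty 1 (hX.2 _ (𝒮.singleton_mem_S hβ le_rfl) (empty_subset _))

theorem maxIn_of_forall_insert_notMem_S {β : Ordinal} (hβ : β < omegaOne) {X : Finset ℕ}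
    (hX : X ∈ 𝒮.S β) (N : ℕ) (h : ∀ M, N ≤ M → (∀ x ∈ X, x < M) → insert M X ∉ 𝒮.S β) :
    MaxIn (𝒮.S β) X :=
  maxIn_of_forall_insert_notMem (𝒮.isLowerSet_S hβ) (𝒮.isSpreading_S hβ) hX N h

theorem mem_S_α_of_le {ξ : Ordinal} (hlim : Order.IsSuccLimit ξ) (hξ : ξ < omegaOne)
    {X : Finset ℕ} {n m : ℕ} (hn : 1 ≤ n) (hnm : n ≤ m) (hX : X ∈ 𝒮.S (𝒮.α ξ n))
    (hmX : finLE m X) : X ∈ 𝒮.S (𝒮.α ξ m) := by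
  induction m, hnm using Nat.le_induction with
  | base => exact hX
  | succ m hnm ih =>
    have hXm := ih fun x hx => (Nat.le_succ m).trans (hmX x hx)
    have hm : 1 ≤ m := hn.trans hnm
    simpa using 𝒮.α_union ξ hlim hξ m hm X ∅ hXm
      (𝒮.isLowerSet_S (𝒮.α_lt_omegaOne hlim hξ hm) (empty_subset X) hXm)
      (fun x hx => by have := hmX x hx; omega) (fun _ _ _ h => absurd h (notMem_empty _))

theorem one_le_of_mem_S_limit {ξ : Ordinal} (hlim : Order.IsSuccLimit ξ) (hξ : ξ < omegaOne)
    {X : Finset ℕ} (hX : X ∈ 𝒮.S ξ) {x : ℕ} (hx : x ∈ X) : 1 ≤ x := by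
  rw [𝒮.S_limit ξ hlim hξ] at hX
  obtain ⟨n, hn, hnX, -⟩ := hX
  exact hn.trans (hnX x hx)

theorem mem_S_limit_iff {ξ : Ordinal} (hlim : Order.IsSuccLimit ξ) (hξ : ξ < omegaOne)
    {X : Finset ℕ} {m : ℕ} (hm : m ∈ X) (hmX : finLE m X) (h1 : 1 ≤ m) :
    X ∈ 𝒮.S ξ ↔ X ∈ 𝒮.S (𝒮.α ξ m) := by
  rw [𝒮.S_limit ξ hlim hξ]
  exact ⟨fun ⟨n, hn, hnX, hX⟩ => 𝒮.mem_S_α_of_le hlim hξ hn (hnX m hm) hX hmX,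
    fun hX => ⟨m, h1, hmX, hX⟩⟩

theorem maxIn_S_limit_iff {ξ : Ordinal} (hlim : Order.IsSuccLimit ξ) (hξ : ξ < omegaOne)
    {X : Finset ℕ} {m : ℕ} (hm : m ∈ X) (hmX : finLE m X) (h1 : 1 ≤ m) :
    MaxIn (𝒮.S ξ) X ↔ MaxIn (𝒮.S (𝒮.α ξ m)) X := by
  have hins : ∀ M, m ≤ M → (insert M X ∈ 𝒮.S ξ ↔ insert M X ∈ 𝒮.S (𝒮.α ξ m)) :=
    fun M hM => 𝒮.mem_S_limit_iff hlim hξ (mem_insert_of_mem hm)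
      (hmX.insert hM) h1
  have hnew : ∀ {M}, (∀ x ∈ X, x < M) → M ∉ X := fun hM hMX => lt_irrefl _ (hM _ hMX)
  constructor
  · intro hX
    refine 𝒮.maxIn_of_forall_insert_notMem_S (𝒮.α_lt_omegaOne hlim hξ h1)
      ((𝒮.mem_S_limit_iff hlim hξ hm hmX h1).mp hX.1) m fun M hM hXM hins' => ?_
    exact hX.insert_notMem (hnew hXM) ((hins M hM).mpr hins')
  · intro hX
    refine 𝒮.maxIn_of_forall_insert_notMem_S hξ
      ((𝒮.mem_S_limit_iff hlim hξ hm hmX h1).mpr hX.1) m fun M hM hXM hins' => ?_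
    exact hX.insert_notMem (hnew hXM) ((hins M hM).mp hins')

theorem eq_singleton_of_maxIn {ξ : Ordinal} (hξ : ξ < omegaOne) {X : Finset ℕ}
    (hX : MaxIn (𝒮.S ξ) X) {x : ℕ} (hx : x ∈ X) (hx1 : x ≤ 1) : X = {x} := by
  induction ξ using Ordinal.limitRecOn generalizing X with
  | zero =>
    have hX0 := hX.1
    rw [𝒮.S_zero] at hX0
    obtain rfl | ⟨n, rfl⟩ := hX0
    · exact absurd hx (notMem_empty x)
    · rw [mem_singleton.mp hx]
  | add_one γ ih =>
    have hγ := lt_omegaOne_of_add_one_lt hξ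
    have hXs := hX.1
    rw [𝒮.S_succ] at hXs
    obtain ⟨n, E, hEγ, -, -, hEn, rfl⟩ := hXs
    obtain ⟨i, hi⟩ := mem_biUnion.mp hx
    -- there is a single block, since `n ≤ x ≤ 1`
    obtain rfl : n = 1 := by have := hEn i x hi.2; have := i.pos; omega
    have hXi : univ.biUnion E = E i := by
      ext y; simp [Subsingleton.elim _ i]
    rw [hXi] at hX hx ⊢
    refine ih hγ ?_ hx
    refine 𝒮.maxIn_of_forall_insert_notMem_S hγ (hEγ i) 1 fun M hM hEM hins => ?_
    refine hX.insert_notMem (fun hMi => lt_irrefl M (hEM M hMi)) ?_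
    rw [𝒮.S_succ]
    exact mem_succStep_of_mem hins (insert_nonempty M _) ((hEn i).insert hM)
  | limit ξ hlim ih =>
    have hne : X.Nonempty := ⟨x, hx⟩
    have h1 := 𝒮.one_le_of_mem_S_limit hlim hξ hX.1 (X.min'_mem hne)
    exact ih _ (𝒮.α_lt ξ hlim hξ _ h1) (𝒮.α_lt_omegaOne hlim hξ h1)
      ((𝒮.maxIn_S_limit_iff hlim hξ (X.min'_mem hne) (fun y hy => X.min'_le y hy) h1).mp hX) hx

theorem maxIn_sdiff_union_of_isBlockDecomp {β : Ordinal} (hβ : β < omegaOne) {X : Finset ℕ}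
    {k : ℕ} {C : Fin k → Finset ℕ} (hC : IsBlockDecomp (𝒮.S β) X C) (hk : k ∈ X)
    (hkX : finLE k X) (i : Fin k) {B : Finset ℕ} (hB : MaxIn (𝒮.S β) B)
    (hleft : ∀ p < i, finLT (C p) B) (hright : ∀ p, i < p → finLT B (C p))
    (hkB : finLE k B) (hkiB : k ∈ C i → k ∈ B) :
    MaxIn (𝒮.S (β + 1)) ((X \ C i) ∪ B) := by
  rw [𝒮.S_succ]
  refine (hC.update i hB (𝒮.nonempty_of_maxIn hβ hB) hleft hright).maxIn_succStep
    (𝒮.isLowerSet_S hβ) (𝒮.isSpreading_S hβ) ?_ ?_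
  · by_cases hki : k ∈ C i
    exacts [mem_union_right _ (hkiB hki), mem_union_left _ (mem_sdiff.mpr ⟨hk, hki⟩)]
  · intro x hx
    exact (mem_union.mp hx).elim (fun hx => hkX x (mem_sdiff.mp hx).1) (hkB x)

theorem isNode_self {ξ : Ordinal} (hξ : ξ < omegaOne) {X : Finset ℕ} (hX : MaxIn (𝒮.S ξ) X) :
    IsNode 𝒮 ξ X X := by
  induction ξ using Ordinal.limitRecOn generalizing X with
  | zero =>
    have hX0 := hX.1
    rw [𝒮.S_zero] at hX0
    obtain rfl | ⟨n, rfl⟩ := hX0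
    · exact absurd (𝒮.nonempty_of_maxIn hξ hX) not_nonempty_empty
    · exact ⟨0, .zero n⟩
  | add_one γ ih => exact ⟨γ + 1, .succRoot γ X hX⟩
  | limit ξ hlim ih =>
    have hne := 𝒮.nonempty_of_maxIn hξ hX
    have h1 := 𝒮.one_le_of_mem_S_limit hlim hξ hX.1 (X.min'_mem hne)
    obtain ⟨δ, hδ⟩ := ih _ (𝒮.α_lt ξ hlim hξ _ h1) (𝒮.α_lt_omegaOne hlim hξ h1)
      ((𝒮.maxIn_S_limit_iff hlim hξ (X.min'_mem hne) (fun y hy => X.min'_le y hy) h1).mp hX)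
    exact ⟨δ, .limit ξ hlim X hX hne X δ hδ⟩

end SchreierSystem

namespace AnalysisMem

variable {𝒮 : SchreierSystem}

theorem subset {ξ : Ordinal} {A D : Finset ℕ} {β : Ordinal} (h : AnalysisMem 𝒮 ξ A D β) :
    D ⊆ A := by
  induction h with
  | zero => exact Subset.refl _
  | succRoot => exact Subset.refl _
  | succChild _ _ _ _ E _ _ _ _ _ hU i _ _ _ ih =>
    exact ih.trans (hU ▸ subset_biUnion_of_mem E (mem_univ i))
  | limit _ _ _ _ _ _ _ _ ih => exact ih

theorem le {ξ : Ordinal} {A D : Finset ℕ} {β : Ordinal} (h : AnalysisMem 𝒮 ξ A D β)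
    (hξ : ξ < omegaOne) : β ≤ ξ := by
  induction h with
  | zero => exact le_rfl
  | succRoot => exact le_rfl
  | succChild γ _ _ _ _ _ _ _ _ _ _ _ _ _ _ ih =>
    exact (ih (lt_omegaOne_of_add_one_lt hξ)).trans (lt_add_one γ).le
  | limit ξ hlim A hA hne _ _ _ ih =>
    have h1 := 𝒮.one_le_of_mem_S_limit hlim hξ hA.1 (A.min'_mem hne)
    exact (ih (𝒮.α_lt_omegaOne hlim hξ h1)).trans (𝒮.α_lt ξ hlim hξ _ h1).le

theorem nonempty {ξ : Ordinal} {A D : Finset ℕ} {β : Ordinal} (h : AnalysisMem 𝒮 ξ A D β)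
    (hξ : ξ < omegaOne) : D.Nonempty := by
  induction h with
  | zero a => exact singleton_nonempty a
  | succRoot _ _ hA => exact 𝒮.nonempty_of_maxIn hξ hA
  | succChild _ _ _ _ _ _ _ _ _ _ _ _ _ _ _ ih => exact ih (lt_omegaOne_of_add_one_lt hξ)
  | limit ξ hlim A hA hne _ _ _ ih =>
    exact ih (𝒮.α_lt_omegaOne hlim hξ (𝒮.one_le_of_mem_S_limit hlim hξ hA.1 (A.min'_mem hne)))

theorem exists_isBlockDecomp_of_ne {γ : Ordinal} {A D : Finset ℕ} {β : Ordinal}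
    (h : AnalysisMem 𝒮 (γ + 1) A D β) (hDA : D ≠ A) :
    ∃ (k : ℕ) (C : Fin k → Finset ℕ), k ∈ A ∧ finLE k A ∧ IsBlockDecomp (𝒮.S γ) A C ∧
      ∃ i, AnalysisMem 𝒮 γ (C i) D β := by
  generalize hδ : γ + 1 = δ at h
  cases h with
  | zero => exact absurd hδ (lt_add_one γ).ne_bot
  | succRoot => exact absurd rfl hDA
  | succChild γ' _ _ k E hk hkA hE hne hlt hU i _ _ h =>
    obtain rfl : γ = γ' := Order.succ_injective (by simpa [Order.succ_eq_add_one] using hδ)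
    exact ⟨k, E, hk, hkA, ⟨hE, hne, hlt, hU⟩, i, h⟩
  | limit _ hlim => exact absurd (hδ ▸ hlim) (Order.not_isSuccLimit_add_one γ)

theorem of_isSuccLimit {ξ : Ordinal} (hlim : Order.IsSuccLimit ξ) {A D : Finset ℕ}
    {β : Ordinal} (h : AnalysisMem 𝒮 ξ A D β) (hne : A.Nonempty) :
    AnalysisMem 𝒮 (𝒮.α ξ (A.min' hne)) A D β := by
  cases h with
  | zero => exact absurd hlim Ordinal.not_isSuccLimit_zero
  | succRoot γ => exact absurd hlim (Order.not_isSuccLimit_add_one γ)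
  | succChild γ => exact absurd hlim (Order.not_isSuccLimit_add_one γ)
  | limit _ _ _ _ _ _ _ h => exact h

theorem of_subset_block {γ : Ordinal} (hγ : γ + 1 < omegaOne) {A D : Finset ℕ} {β : Ordinal}
    (h : AnalysisMem 𝒮 (γ + 1) A D β) {k : ℕ} {C : Fin k → Finset ℕ}
    (hC : IsBlockDecomp (𝒮.S γ) A C) (hk : k ∈ A) (hkA : finLE k A) {i : Fin k}
    (hDi : D ⊆ C i) (hDA : D ≠ A) : AnalysisMem 𝒮 γ (C i) D β := by
  obtain ⟨k', C', hk', hk'A, hC', j, hj⟩ := h.exists_isBlockDecomp_of_ne hDA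
  obtain rfl : k' = k := le_antisymm (hk'A k hk) (hkA k' hk')
  obtain rfl := hC'.eq hC
  obtain ⟨x, hx⟩ := h.nonempty hγ
  rwa [hC'.eq_of_mem (hDi hx) (hj.subset hx)]

theorem exists_isBlockDecomp_of_ssubset {ξ : Ordinal} (hξ : ξ < omegaOne) {A E : Finset ℕ}
    {γ : Ordinal} (hE : AnalysisMem 𝒮 ξ A E (γ + 1)) {D : Finset ℕ} {β : Ordinal}
    (hD : AnalysisMem 𝒮 ξ A D β) (hDE : D ⊂ E) :
    ∃ (k : ℕ) (C : Fin k → Finset ℕ), k ∈ E ∧ finLE k E ∧ IsBlockDecomp (𝒮.S γ) E C ∧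
      (∀ p, IsNode 𝒮 ξ A (C p)) ∧ ∃ i, D ⊆ C i := by
  generalize hδ : γ + 1 = δ at hE
  induction hE generalizing D β with
  | zero => exact absurd hδ (lt_add_one γ).ne_bot
  | succRoot γ' A hA =>
    obtain rfl : γ = γ' := Order.succ_injective (by simpa [Order.succ_eq_add_one] using hδ)
    obtain ⟨k, C, hk, hkA, hC, i, hDi⟩ := hD.exists_isBlockDecomp_of_ne hDE.ne
    refine ⟨k, C, hk, hkA, hC, fun p => ?_, i, hDi.subset⟩
    exact (𝒮.isNode_self (lt_omegaOne_of_add_one_lt hξ) (hC.maxIn p)).imp fun β hβ =>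
      .succChild γ A hA k C hk hkA hC.maxIn hC.nonempty hC.finLT_of_lt hC.eq_biUnion p _ β hβ
  | succChild γ₁ A hA k C hk hkA hCmax hCne hClt hCU i E δ hEi ih =>
    have hC : IsBlockDecomp (𝒮.S γ₁) A C := ⟨hCmax, hCne, hClt, hCU⟩
    have hEA := hC.subset i
    obtain ⟨k', C', hk', hk'E, hC', hnode, j, hDj⟩ := ih (lt_omegaOne_of_add_one_lt hξ)
      (hD.of_subset_block hξ hC hk hkA (hDE.subset.trans hEi.subset)
        (hDE.trans_subset (hEi.subset.trans hEA)).ne) hDE hδ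
    exact ⟨k', C', hk', hk'E, hC', fun p => (hnode p).imp fun β hβ =>
      .succChild γ₁ A hA k C hk hkA hCmax hCne hClt hCU i _ β hβ, j, hDj⟩
  | limit ξ hlim A hA hne E δ hEα ih =>
    have h1 := 𝒮.one_le_of_mem_S_limit hlim hξ hA.1 (A.min'_mem hne)
    obtain ⟨k, C, hk, hkE, hC, hnode, i, hDi⟩ :=
      ih (𝒮.α_lt_omegaOne hlim hξ h1) (hD.of_isSuccLimit hlim hne) hDE hδ
    exact ⟨k, C, hk, hkE, hC, fun p => (hnode p).imp fun β hβ => .limit ξ hlim A hA hne _ β hβ,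
      i, hDi⟩

theorem maxIn_sdiff_union {ξ : Ordinal} (hξ : ξ < omegaOne) {A E : Finset ℕ} {δ : Ordinal}
    (hE : AnalysisMem 𝒮 ξ A E δ) {E' : Finset ℕ} (hE' : MaxIn (𝒮.S δ) E')
    (hmin : E'.min = E.min) (hleft : ∀ D, IsNode 𝒮 ξ A D → finLT D E → finLT D E')
    (hright : ∀ D, IsNode 𝒮 ξ A D → finLT E D → finLT E' D) :
    MaxIn (𝒮.S ξ) ((A \ E) ∪ E') := by
  induction hE generalizing E' with
  | zero | succRoot => simpa using hE'
  | succChild γ A hA k C hk hkA hCmax hCne hClt hCU i E δ hEi ih =>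
    have hγ := lt_omegaOne_of_add_one_lt hξ
    have hC : IsBlockDecomp (𝒮.S γ) A C := ⟨hCmax, hCne, hClt, hCU⟩
    have lift : ∀ p {D}, IsNode 𝒮 γ (C p) D → IsNode 𝒮 (γ + 1) A D := fun p _ hD =>
      hD.imp fun β hβ => .succChild γ A hA k C hk hkA hCmax hCne hClt hCU p _ β hβ
    have hnode : ∀ p, IsNode 𝒮 (γ + 1) A (C p) := fun p => lift p (𝒮.isNode_self hγ (hCmax p))
    have hEC := hEi.subset
    have hkE : finLE k E := fun x hx => hkA x (hC.subset i (hEC hx))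
    rw [← sdiff_union_sdiff_union hEC (hC.subset i)]
    refine 𝒮.maxIn_sdiff_union_of_isBlockDecomp hγ hC hk hkA i
      (ih hγ hE' hmin (fun D hD => hleft D (lift i hD)) (fun D hD => hright D (lift i hD)))
      (fun p hp => ?_) (fun p hp => ?_) ?_ fun hki => ?_
    · exact ((hClt p i hp).mono subset_rfl sdiff_subset).union_right
        (hleft _ (hnode p) ((hClt p i hp).mono subset_rfl hEC))
    · exact ((hClt i p hp).mono sdiff_subset subset_rfl).union_left
        (hright _ (hnode p) ((hClt i p hp).mono hEC subset_rfl))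
    · intro x hx
      exact (mem_union.mp hx).elim (fun hx => hkA x (hC.subset i (mem_sdiff.mp hx).1))
        (hkE.of_min_eq hmin x)
    · by_cases hkE' : k ∈ E
      exacts [mem_union_right _ (mem_of_min_eq hkE' hkE hmin),
        mem_union_left _ (mem_sdiff.mpr ⟨hki, hkE'⟩)]
  | limit ξ hlim A hA hne E δ hEα ih =>
    have h1 := 𝒮.one_le_of_mem_S_limit hlim hξ hA.1 (A.min'_mem hne)
    have lift : ∀ {D}, IsNode 𝒮 (𝒮.α ξ (A.min' hne)) A D → IsNode 𝒮 ξ A D := fun hD =>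
      hD.imp fun β hβ => .limit ξ hlim A hA hne _ β hβ
    have hmE : finLE (A.min' hne) E := fun x hx => A.min'_le x (hEα.subset hx)
    refine (𝒮.maxIn_S_limit_iff hlim hξ ?_ ?_ h1).mpr (ih (𝒮.α_lt_omegaOne hlim hξ h1) hE' hmin
      (fun D hD => hleft D (lift hD)) (fun D hD => hright D (lift hD)))
    · by_cases hm : A.min' hne ∈ E
      exacts [mem_union_right _ (mem_of_min_eq hm hmE hmin),
        mem_union_left _ (mem_sdiff.mpr ⟨A.min'_mem hne, hm⟩)]
    · intro x hx
      exact (mem_union.mp hx).elim (fun hx => A.min'_le x (mem_sdiff.mp hx).1)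
        (hmE.of_min_eq hmin x)

theorem maxIn_sdiff_union_block {ξ : Ordinal} (hξ : ξ < omegaOne) {A E : Finset ℕ}
    {γ : Ordinal} (hE : AnalysisMem 𝒮 ξ A E (γ + 1))
    {k : ℕ} {C : Fin k → Finset ℕ} (hC : IsBlockDecomp (𝒮.S γ) E C) (hk : k ∈ E)
    (hkE : finLE k E) (hnode : ∀ p, IsNode 𝒮 ξ A (C p)) {i : Fin k} (hki : k ∉ C i)
    {D' : Finset ℕ} (hD' : MaxIn (𝒮.S γ) D')
    (hleft : ∀ D, IsNode 𝒮 ξ A D → finLT D (C i) → finLT D D')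
    (hright : ∀ D, IsNode 𝒮 ξ A D → finLT (C i) D → finLT D' D) :
    MaxIn (𝒮.S ξ) ((A \ C i) ∪ D') := by
  have hγ : γ < omegaOne := ((lt_add_one γ).trans_le (hE.le hξ)).trans hξ
  obtain ⟨p, hkp⟩ := hC.mem_iff.mp hk
  have hpi : p < i := by
    obtain ⟨x, hx⟩ := hC.nonempty i
    rcases lt_trichotomy p i with h | rfl | h
    exacts [h, absurd hkp hki,
      absurd (hkE x (hC.subset i hx)) (not_le.mpr (hC.finLT_of_lt i p h x hx k hkp))]
  have hkD' : finLE k D' := fun y hy => (hleft _ (hnode p) (hC.finLT_of_lt p i hpi) k hkp y hy).le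
  have hE' := 𝒮.maxIn_sdiff_union_of_isBlockDecomp hγ hC hk hkE i hD'
    (fun q hq => hleft _ (hnode q) (hC.finLT_of_lt q i hq))
    (fun q hq => hright _ (hnode q) (hC.finLT_of_lt i q hq)) hkD' (absurd · hki)
  have hmin : ((E \ C i) ∪ D').min = E.min := by
    rw [min_eq_of_finLE hk hkE, min_eq_of_finLE (mem_union_left _ (mem_sdiff.mpr ⟨hk, hki⟩))
      fun x hx => (mem_union.mp hx).elim (fun hx => hkE x (mem_sdiff.mp hx).1) (hkD' x)]
  rw [← sdiff_union_sdiff_union (hC.subset i) hE.subset]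
  refine hE.maxIn_sdiff_union hξ hE' hmin (fun D hD hDE => ?_) (fun D hD hED => ?_)
  · exact (hDE.mono subset_rfl sdiff_subset).union_right
      (hleft D hD (hDE.mono subset_rfl (hC.subset i)))
  · exact (hED.mono sdiff_subset subset_rfl).union_left
      (hright D hD (hED.mono (hC.subset i) subset_rfl))

end AnalysisMem

theorem replacement_lemma_general (𝒮 : SchreierSystem) (ξ : Ordinal) (hξ : ξ < omegaOne)
    (A : Finset ℕ) (hA : MaxIn (𝒮.S ξ) A)
    (a : ℕ) (ha : a ∈ A) (hgt : ∃ b ∈ A, b < a)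
    (D₀ : Finset ℕ) (hD₀ : IsNode 𝒮 ξ A D₀)
    (hD₀min : a ∈ D₀ ∧ finLE a D₀)
    (hD₀top : ∀ D : Finset ℕ, IsNode 𝒮 ξ A D → a ∈ D → finLE a D → D ⊆ D₀)
    (E : Finset ℕ) (hD₀E : D₀ ⊂ E)
    (hEimm : ∀ D : Finset ℕ, IsNode 𝒮 ξ A D → D₀ ⊂ D → ¬ D ⊂ E)
    (γ : Ordinal) (hord : AnalysisMem 𝒮 ξ A E (γ + 1))
    (D' : Finset ℕ) (hD' : MaxIn (𝒮.S γ) D')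
    (hleft : ∀ D : Finset ℕ, IsNode 𝒮 ξ A D → finLT D D₀ → finLT D D')
    (hright : ∀ D : Finset ℕ, IsNode 𝒮 ξ A D → finLT D₀ D → finLT D' D) :
    MaxIn (𝒮.S ξ) ((A \ D₀) ∪ D') := by
  obtain ⟨b, hbA, hba⟩ := hgt
  obtain ⟨β₀, hD₀⟩ := hD₀
  obtain ⟨k, C, hk, hkE, hC, hnode, i, hD₀i⟩ := hord.exists_isBlockDecomp_of_ssubset hξ hD₀ hD₀E
  have h2A : finLE 2 A := fun x hx => by
    by_contra! hx2
    have hA1 := 𝒮.eq_singleton_of_maxIn hξ hA hx (by omega)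
    rw [hA1, mem_singleton] at ha hbA
    omega
  -- `E` has at least two children, so `D₀` is one of them
  obtain rfl : D₀ = C i := by
    have := Fin.nontrivial_iff_two_le.mpr (h2A k (hord.subset hk))
    obtain ⟨p, hp⟩ := exists_ne i
    obtain ⟨x, hx⟩ := hC.nonempty p
    by_contra hne
    exact hEimm (C i) (hnode i) (ssubset_of_subset_of_ne hD₀i hne)
      ((ssubset_iff_of_subset (hC.subset i)).mpr
        ⟨x, hC.subset p hx, fun hxi => hp (hC.eq_of_mem hx hxi)⟩)
  -- otherwise `E` would be a node with minimum `a` strictly above `D₀`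
  have hki : k ∉ C i := fun hki => not_subset_of_ssubset hD₀E
    (hD₀top E ⟨_, hord⟩ (hD₀E.subset hD₀min.1) fun x hx => (hD₀min.2 k hki).trans (hkE x hx))
  exact hord.maxIn_sdiff_union_block hξ hC hk hkE hnode hki hD' hleft hright

/-- **the replacement lemma.**  Let `ξ < ω₁`, `A ∈ MAX(S_ξ)` and `a ∈ A`
with `a > min A`.  Let `D₀ = D_{ξ,A}(a)` be the node of `T(ξ,A)` with `min D₀ = a`
closest to the root (it contains every node whose minimum is `a`), let `E` be the
immediate predecessor of `D₀` in `T(ξ,A)` and let `γ + 1 = order_{ξ,A}(E)`.  Then for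
every `D' ∈ MAX(S_γ)` contained in the interval `(m₁, m₂)` — i.e. lying strictly to the
right of every node preceding `D₀` and strictly to the left of every node following
`D₀` — the set `(A \ D₀) ∪ D'` is again in `MAX(S_ξ)`. -/
theorem replacement_lemma (𝒮 : SchreierSystem) (ξ : Ordinal) (hξ : ξ < omegaOne)
    (A : Finset ℕ) (hA : MaxIn (𝒮.S ξ) A)
    (a : ℕ) (ha : a ∈ A) (hgt : ∃ b ∈ A, b < a)
    (D₀ : Finset ℕ) (hD₀ : IsNode 𝒮 ξ A D₀)
    (hD₀min : a ∈ D₀ ∧ finLE a D₀)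
    (hD₀top : ∀ D : Finset ℕ, IsNode 𝒮 ξ A D → a ∈ D → finLE a D → D ⊆ D₀)
    (E : Finset ℕ) (hE : IsNode 𝒮 ξ A E) (hD₀E : D₀ ⊂ E)
    (hEimm : ∀ D : Finset ℕ, IsNode 𝒮 ξ A D → D₀ ⊂ D → ¬ D ⊂ E)
    (γ : Ordinal) (hord : AnalysisMem 𝒮 ξ A E (γ + 1))
    (D' : Finset ℕ) (hD' : MaxIn (𝒮.S γ) D')
    (hleft : ∀ D : Finset ℕ, IsNode 𝒮 ξ A D → finLT D D₀ → finLT D D')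
    (hright : ∀ D : Finset ℕ, IsNode 𝒮 ξ A D → finLT D₀ D → finLT D' D) :
    MaxIn (𝒮.S ξ) ((A \ D₀) ∪ D') :=
  replacement_lemma_general 𝒮 ξ hξ A hA a ha hgt D₀ hD₀ hD₀min hD₀top E hD₀E hEimm γ hord D' hD'
    hleft hright
end
end
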